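/- There exists an absolute constant c > 0 such that, in the perturbation setup with the additional hypotheses ‖b‖ ≤ 1 and ‖b̄‖ ≤ 1, whenever M is invertible and c m ε (Δ ‖M⁻¹‖)² ≤ 1, then M̄ is invertible and the conjugate-gradient (kernel PLS) iterates g = R M⁻¹ R* b and ḡ = R̄ M̄⁻¹ R̄* b̄ satisfy ‖g − ḡ‖ ≤ c m ε (Δ ‖M⁻¹‖)². -/

import Mathlib

/-!
`g = R (R†SR)⁻¹ R† b` is the Galerkin solution of `S g = b` on the range of the Krylov map `R`,
so it is enough to control how `R`, `M = R†SR` and `M⁻¹` move under the perturbation.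
Horner's rule `R v = v₀ b + S R (shift v)` telescopes to `‖R - R̄‖ ≤ √m ε + m ε ‖R‖`, which is
at most `2 m ε √Δ` because `‖R‖² = ‖R†R‖ ≤ Δ` and `Δ ≥ 1/m`. Hence `‖M - M̄‖ ≤ 8 m ε Δ`, and
since `Δ ‖M⁻¹‖ ≥ ‖M‖ ‖M⁻¹‖ ≥ 1` the smallness hypothesis gives `‖M⁻¹‖ ‖M - M̄‖ ≤ 1/2`: so `M̄`
stays invertible with `‖M̄⁻¹‖ ≤ 2 ‖M⁻¹‖`, and `M⁻¹ - M̄⁻¹ = M⁻¹ (M̄ - M) M̄⁻¹` bounds the rest.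
-/

open Finset ContinuousLinearMap
open scoped RealInnerProductSpace

lemma sum_abs_le_sqrt_card_mul_norm {ι : Type*} [Fintype ι] (v : EuclideanSpace ℝ ι) :
    ∑ i, |v i| ≤ √(Fintype.card ι) * ‖v‖ := by
  have := Real.sum_mul_le_sqrt_mul_sqrt univ (fun i => |v i|) fun _ => 1
  simp only [mul_one, one_pow, sum_const, card_univ, nsmul_eq_mul, sq_abs] at this
  rw [EuclideanSpace.norm_eq, mul_comm]
  simpa only [Real.norm_eq_abs, sq_abs] using this

section Krylov

variable {E : Type*} [NormedAddCommGroup E] [NormedSpace ℝ E]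

def krylov (T : E →L[ℝ] E) (x : E) (c : ℕ → ℝ) (n : ℕ) : E :=
  ∑ i ∈ range n, c i • (T ^ i) x

lemma krylov_succ (T : E →L[ℝ] E) (x : E) (c : ℕ → ℝ) (n : ℕ) :
    krylov T x c (n + 1) = c 0 • x + T (krylov T x (fun i => c (i + 1)) n) := by
  simp only [krylov, sum_range_succ', pow_succ', mul_apply_eq_comp, pow_zero, one_apply_eq_self,
    map_sum, map_smul, add_comm]

lemma krylov_eq_of_le {T : E →L[ℝ] E} {x : E} {c : ℕ → ℝ} {n n' : ℕ} (hn : n ≤ n')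
    (hc : ∀ i, n ≤ i → c i = 0) : krylov T x c n = krylov T x c n' :=
  sum_subset (range_subset_range.2 hn) fun i _ hi => by
    simp [hc i (by simpa using hi)]

lemma norm_krylov_sub_krylov_le {T T' : E →L[ℝ] E} (hT' : ‖T'‖ ≤ 1) (x x' : E) (n : ℕ)
    (c : ℕ → ℝ) :
    ‖krylov T x c n - krylov T' x' c n‖ ≤ ∑ j ∈ range n,
      (|c j| * ‖x - x'‖ + ‖T - T'‖ * ‖krylov T x (fun i => c (i + j + 1)) (n - (j + 1))‖) := by
  induction n generalizing c with
  | zero => simp [krylov]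
  | succ n ih =>
    have hsplit : krylov T x c (n + 1) - krylov T' x' c (n + 1)
        = c 0 • (x - x') + (T - T') (krylov T x (fun i => c (i + 1)) n)
          + T' (krylov T x (fun i => c (i + 1)) n - krylov T' x' (fun i => c (i + 1)) n) := by
      simp only [krylov_succ, smul_sub, sub_apply, map_sub]
      abel
    rw [hsplit, sum_range_succ']
    refine (norm_add₃_le ..).trans ?_
    have h1 : ‖c 0 • (x - x')‖ ≤ |c 0| * ‖x - x'‖ := by rw [norm_smul, Real.norm_eq_abs]
    have h2 := (T - T').le_opNorm (krylov T x (fun i => c (i + 1)) n)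
    have h3 := (T'.le_of_opNorm_le hT' _).trans_eq (one_mul _) |>.trans (ih fun i => c (i + 1))
    simp only [← add_assoc, add_zero, Nat.add_sub_cancel, Nat.add_sub_add_right] at h3 ⊢
    linarith

variable {m : ℕ}

def extendByZero (v : EuclideanSpace ℝ (Fin m)) (i : ℕ) : ℝ :=
  if h : i < m then v ⟨i, h⟩ else 0

@[simp]
lemma extendByZero_coe (v : EuclideanSpace ℝ (Fin m)) (i : Fin m) :
    extendByZero v i = v i :=
  dif_pos i.isLt

lemma extendByZero_of_le (v : EuclideanSpace ℝ (Fin m)) {i : ℕ} (hi : m ≤ i) :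
    extendByZero v i = 0 :=
  dif_neg hi.not_gt

lemma norm_shift_extendByZero_le (v : EuclideanSpace ℝ (Fin m)) (s : ℕ) :
    ‖WithLp.toLp 2 fun k : Fin m => extendByZero v (k + s)‖ ≤ ‖v‖ := by
  set f : ℕ → ℝ := fun k => ‖extendByZero v k‖ ^ 2
  have hf : ∑ k ∈ range s, f (m + k) = 0 :=
    sum_eq_zero fun k _ => by simp [f, extendByZero_of_le v (Nat.le_add_right m k)]
  rw [EuclideanSpace.norm_eq, EuclideanSpace.norm_eq]
  refine Real.sqrt_le_sqrt ?_
  calc ∑ k : Fin m, ‖extendByZero v (k + s)‖ ^ 2 = ∑ k ∈ range m, f (s + k) := by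
        rw [Fin.sum_univ_eq_sum_range (fun k => f (k + s))]; simp only [add_comm]
    _ ≤ ∑ k ∈ range (s + m), f k := by
        rw [sum_range_add]; exact le_add_of_nonneg_left (sum_nonneg fun _ _ => by positivity)
    _ = ∑ i : Fin m, ‖v i‖ ^ 2 := by
        rw [add_comm, sum_range_add, hf, add_zero, ← Fin.sum_univ_eq_sum_range]
        simp [f]

lemma norm_sub_le_of_krylov {H : Type*} [NormedAddCommGroup H] [NormedSpace ℝ H]
    {S S' : H →L[ℝ] H} {b b' : H} (hS' : ‖S'‖ ≤ 1) {R R' : EuclideanSpace ℝ (Fin m) →L[ℝ] H}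
    (hR : ∀ v, R v = ∑ i : Fin m, v i • (S ^ (i : ℕ)) b)
    (hR' : ∀ v, R' v = ∑ i : Fin m, v i • (S' ^ (i : ℕ)) b') :
    ‖R - R'‖ ≤ √m * ‖b - b'‖ + m * ‖S - S'‖ * ‖R‖ := by
  have hkrylov : ∀ (T : H →L[ℝ] H) (x : H) (c : ℕ → ℝ),
      ∑ i : Fin m, c i • (T ^ (i : ℕ)) x = krylov T x c m := fun T x c =>
    Fin.sum_univ_eq_sum_range (fun i => c i • (T ^ i) x) m
  refine opNorm_le_bound _ (by positivity) fun v => ?_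
  set c := extendByZero v
  have hshift : ∀ j ∈ range m,
      ‖krylov S b (fun i => c (i + j + 1)) (m - (j + 1))‖ ≤ ‖R‖ * ‖v‖ := fun j _ => by
    rw [krylov_eq_of_le (Nat.sub_le m (j + 1)) fun i hi => extendByZero_of_le v (by omega),
      ← hkrylov, ← hR (WithLp.toLp 2 fun k : Fin m => c (k + j + 1))]
    exact R.le_of_opNorm_le_of_le le_rfl (norm_shift_extendByZero_le v (j + 1))
  calc ‖(R - R') v‖ = ‖krylov S b c m - krylov S' b' c m‖ := by
        simp only [sub_apply, hR, hR', ← hkrylov, c, extendByZero_coe]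
    _ ≤ ∑ j ∈ range m, (|c j| * ‖b - b'‖ + ‖S - S'‖ * (‖R‖ * ‖v‖)) :=
        (norm_krylov_sub_krylov_le hS' b b' m c).trans (by gcongr with j hj; exact hshift j hj)
    _ = (∑ i : Fin m, |v i|) * ‖b - b'‖ + m * ‖S - S'‖ * ‖R‖ * ‖v‖ := by
        rw [sum_add_distrib, ← sum_mul, sum_const, card_range, nsmul_eq_mul,
          ← Fin.sum_univ_eq_sum_range (fun j => |c j|)]
        simp only [c, extendByZero_coe]
        ring
    _ ≤ (√m * ‖b - b'‖ + m * ‖S - S'‖ * ‖R‖) * ‖v‖ := by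
        have := sum_abs_le_sqrt_card_mul_norm v
        rw [Fintype.card_fin] at this
        nlinarith [norm_nonneg (b - b')]

end Krylov

section InversePerturbation

variable {A : Type*} [NormedRing A] {a b : A}

lemma IsUnit.of_norm_inverse_mul_norm_sub_le [HasSummableGeomSeries A] (ha : IsUnit a)
    (h : ‖Ring.inverse a‖ * ‖b - a‖ ≤ 1 / 2) :
    IsUnit b ∧ ‖Ring.inverse b‖ ≤ 2 * ‖Ring.inverse a‖ := by
  nontriviality A
  obtain ⟨u, rfl⟩ := ha
  have hu : 0 < ‖(↑u⁻¹ : A)‖ := Units.norm_pos u⁻¹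
  rw [Ring.inverse_unit] at h ⊢
  have hb : IsUnit b := by
    refine (u.ofNearby b ?_).isUnit
    rw [← one_div, lt_div_iff₀ hu]
    linarith [mul_comm ‖b - u‖ ‖(↑u⁻¹ : A)‖]
  refine ⟨hb, ?_⟩
  have key := Ring.inverse_sub_inverse (a := (u : A)) (b := b) ⟨fun _ => hb, fun _ => u.isUnit⟩
  rw [Ring.inverse_unit] at key
  have : ‖Ring.inverse b‖ ≤ ‖(↑u⁻¹ : A)‖ + ‖(↑u⁻¹ : A)‖ * ‖b - u‖ * ‖Ring.inverse b‖ :=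
    calc ‖Ring.inverse b‖ = ‖(↑u⁻¹ : A) - ↑u⁻¹ * (b - u) * Ring.inverse b‖ := by
          rw [← key, sub_sub_cancel]
      _ ≤ _ := (norm_sub_le _ _).trans (by gcongr; exact norm_mul₃_le ..)
  nlinarith [norm_nonneg (Ring.inverse b)]

lemma norm_inverse_sub_inverse_le (h : IsUnit a ↔ IsUnit b) :
    ‖Ring.inverse a - Ring.inverse b‖ ≤ ‖Ring.inverse a‖ * ‖b - a‖ * ‖Ring.inverse b‖ :=
  Ring.inverse_sub_inverse h ▸ norm_mul₃_le ..

end InversePerturbation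

section Composition

variable {𝕜 D E F G : Type*} [NontriviallyNormedField 𝕜] [SeminormedAddCommGroup D]
  [SeminormedAddCommGroup E] [SeminormedAddCommGroup F] [SeminormedAddCommGroup G]
  [NormedSpace 𝕜 D] [NormedSpace 𝕜 E] [NormedSpace 𝕜 F] [NormedSpace 𝕜 G]

lemma ContinuousLinearMap.opNorm_comp_comp_le (f : F →L[𝕜] G) (g : E →L[𝕜] F)
    (h : D →L[𝕜] E) : ‖f ∘L g ∘L h‖ ≤ ‖f‖ * ‖g‖ * ‖h‖ :=
  (opNorm_comp_le _ _).trans <| by rw [mul_assoc]; gcongr; exact opNorm_comp_le _ _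

lemma ContinuousLinearMap.norm_comp_comp_sub_comp_comp_le (f f' : F →L[𝕜] G)
    (g g' : E →L[𝕜] F) (h h' : D →L[𝕜] E) :
    ‖f ∘L g ∘L h - f' ∘L g' ∘L h'‖
      ≤ ‖f - f'‖ * ‖g‖ * ‖h‖ + ‖f'‖ * ‖g - g'‖ * ‖h‖ + ‖f'‖ * ‖g'‖ * ‖h - h'‖ := by
  have hsplit : f ∘L g ∘L h - f' ∘L g' ∘L h'
      = (f - f') ∘L g ∘L h + f' ∘L (g - g') ∘L h + f' ∘L g' ∘L (h - h') := by
    ext x; simp only [sub_apply, add_apply, comp_apply, map_sub]; abel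
  rw [hsplit]
  exact (norm_add₃_le ..).trans
    (add_le_add_three (opNorm_comp_comp_le ..) (opNorm_comp_comp_le ..) (opNorm_comp_comp_le ..))

end Composition

section Galerkin

variable {E H : Type*} [NormedAddCommGroup E] [InnerProductSpace ℝ E] [CompleteSpace E]
  [NormedAddCommGroup H] [InnerProductSpace ℝ H] [CompleteSpace H]

lemma norm_adjoint_sub_adjoint (R R' : E →L[ℝ] H) : ‖adjoint R - adjoint R'‖ = ‖R - R'‖ := by
  rw [← map_sub, LinearIsometryEquiv.norm_map]

theorem galerkin_solution_perturbation [Nontrivial E] {R R' : E →L[ℝ] H} {S S' : H →L[ℝ] H} {b b' : H}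
    {M M' : E →L[ℝ] E} (hM : M = adjoint R ∘L S ∘L R) (hM' : M' = adjoint R' ∘L S' ∘L R')
    {σ K ε : ℝ} (hS : ‖S‖ ≤ 1) (hS' : ‖S'‖ ≤ 1) (hSS' : ‖S - S'‖ ≤ ε)
    (hb : ‖b‖ ≤ 1) (hbb' : ‖b - b'‖ ≤ ε) (hεK : ε ≤ K)
    (hR : ‖R‖ ≤ σ) (hRR' : ‖R - R'‖ ≤ 2 * K * σ)
    (hMu : IsUnit M) (hsmall : 16 * K * (σ ^ 2 * ‖Ring.inverse M‖) ^ 2 ≤ 1) :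
    IsUnit M' ∧ ‖R (Ring.inverse M (adjoint R b)) - R' (Ring.inverse M' (adjoint R' b'))‖
      ≤ 50 * K * (σ ^ 2 * ‖Ring.inverse M‖) ^ 2 := by
  set β := ‖Ring.inverse M‖
  have hσ : 0 ≤ σ := (norm_nonneg R).trans hR
  have hε : 0 ≤ ε := (norm_nonneg _).trans hbb'
  have hK : 0 ≤ K := hε.trans hεK
  have hMσ : ‖M‖ ≤ σ ^ 2 := by
    refine (hM ▸ opNorm_comp_comp_le ..).trans ?_
    rw [LinearIsometryEquiv.norm_map]
    calc ‖R‖ * ‖S‖ * ‖R‖ ≤ σ * 1 * σ := by gcongr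
      _ = σ ^ 2 := by ring
  have hQ : 1 ≤ σ ^ 2 * β := by
    calc (1 : ℝ) = ‖Ring.inverse M * M‖ := by rw [Ring.inverse_mul_cancel M hMu, norm_one]
      _ ≤ β * ‖M‖ := norm_mul_le _ _
      _ ≤ σ ^ 2 * β := by rw [mul_comm]; gcongr
  have hKQ : K * (σ ^ 2 * β) ≤ 1 / 16 := by nlinarith
  have hK1 : K ≤ 1 / 16 := by nlinarith
  have hR' : ‖R'‖ ≤ 2 * σ := by
    nlinarith [norm_le_norm_add_norm_sub R R']
  have hMM' : ‖M' - M‖ ≤ 8 * K * σ ^ 2 := by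
    rw [hM, hM', norm_sub_rev]
    refine (norm_comp_comp_sub_comp_comp_le ..).trans ?_
    rw [norm_adjoint_sub_adjoint, LinearIsometryEquiv.norm_map]
    calc ‖R - R'‖ * ‖S‖ * ‖R‖ + ‖R'‖ * ‖S - S'‖ * ‖R‖ + ‖R'‖ * ‖S'‖ * ‖R - R'‖
        ≤ 2 * K * σ * 1 * σ + 2 * σ * ε * σ + 2 * σ * 1 * (2 * K * σ) := by gcongr
      _ ≤ 8 * K * σ ^ 2 := by nlinarith
  obtain ⟨hM'u, hβ'⟩ := hMu.of_norm_inverse_mul_norm_sub_le (b := M') <| by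
    calc β * ‖M' - M‖ ≤ β * (8 * K * σ ^ 2) := by gcongr
      _ ≤ 1 / 2 := by linarith
  refine ⟨hM'u, ?_⟩
  have hinv : ‖Ring.inverse M - Ring.inverse M'‖ ≤ β * (8 * K * σ ^ 2) * (2 * β) :=
    (norm_inverse_sub_inverse_le ⟨fun _ => hM'u, fun _ => hMu⟩).trans (by gcongr)
  set X := R ∘L Ring.inverse M ∘L adjoint R
  set X' := R' ∘L Ring.inverse M' ∘L adjoint R'
  have hXX' : ‖X - X'‖ ≤ 2 * K * σ * β * σ + 2 * σ * (β * (8 * K * σ ^ 2) * (2 * β)) * σ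
      + 2 * σ * (2 * β) * (2 * K * σ) := by
    refine (norm_comp_comp_sub_comp_comp_le ..).trans ?_
    simp only [norm_adjoint_sub_adjoint, LinearIsometryEquiv.norm_map]
    gcongr
  have hX' : ‖X'‖ ≤ 2 * σ * (2 * β) * (2 * σ) :=
    (opNorm_comp_comp_le ..).trans (by rw [LinearIsometryEquiv.norm_map]; gcongr)
  calc ‖R (Ring.inverse M (adjoint R b)) - R' (Ring.inverse M' (adjoint R' b'))‖
      = ‖(X - X') b + X' (b - b')‖ := by
        simp only [X, X', sub_apply, comp_apply, map_sub]; abel_nf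
    _ ≤ ‖X - X'‖ * 1 + ‖X'‖ * ε :=
        norm_add_le_of_le (le_of_opNorm_le_of_le _ le_rfl hb)
          (le_of_opNorm_le_of_le _ le_rfl hbb')
    _ ≤ 50 * K * (σ ^ 2 * β) ^ 2 := by
        have hX'ε : ‖X'‖ * ε ≤ 8 * (σ ^ 2 * β) * K :=
          mul_le_mul (hX'.trans_eq (by ring)) hεK hε (by positivity)
        have hKQ2 : K * (σ ^ 2 * β) ≤ K * (σ ^ 2 * β) ^ 2 := by
          gcongr; nlinarith
        linarith [hXX'.trans_eq (show _ = 10 * (K * (σ ^ 2 * β)) + 32 * (K * (σ ^ 2 * β) ^ 2) by ring)]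

end Galerkin

/-- There is an absolute constant `c > 0` such that, in the perturbation setup with
`‖b‖ ≤ 1` and `‖b̄‖ ≤ 1`, whenever `M` is invertible and `c m ε (Δ ‖M⁻¹‖)² ≤ 1`, then `M̄`
is invertible and the conjugate-gradient (kernel PLS) iterates `g = R M⁻¹ R* b` and
`ḡ = R̄ M̄⁻¹ R̄* b̄` satisfy `‖g − ḡ‖ ≤ c m ε (Δ ‖M⁻¹‖)²`. -/
theorem stmt17 :
    ∃ c : ℝ, 0 < c ∧
      ∀ (H : Type) (_ : NormedAddCommGroup H) (_ : InnerProductSpace ℝ H) (_ : CompleteSpace H)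
        (S S' : H →L[ℝ] H),
        IsSelfAdjoint S → IsSelfAdjoint S' →
        (∀ x, 0 ≤ ⟪S x, x⟫) → (∀ x, 0 ≤ ⟪S' x, x⟫) → ‖S‖ ≤ 1 → ‖S'‖ ≤ 1 →
        ∀ (b b' : H) (ε : ℝ), 0 < ε → ‖S - S'‖ ≤ ε → ‖b - b'‖ ≤ ε →
        ‖b‖ ≤ 1 → ‖b'‖ ≤ 1 →
        ∀ m : ℕ, 1 ≤ m →
        ∀ (R R' : EuclideanSpace ℝ (Fin m) →L[ℝ] H),
          (∀ v, R v = ∑ i : Fin m, v i • (S ^ (i : ℕ)) b) →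
          (∀ v, R' v = ∑ i : Fin m, v i • (S' ^ (i : ℕ)) b') →
        ∀ (M M' Mp : EuclideanSpace ℝ (Fin m) →L[ℝ] EuclideanSpace ℝ (Fin m)),
          M = (adjoint R) ∘L (S ∘L R) →
          M' = (adjoint R') ∘L (S' ∘L R') →
          Mp = (adjoint R) ∘L R →
        ∀ Δ : ℝ, Δ = max ‖Mp‖ (1 / (m : ℝ)) →
          IsUnit M →
          c * m * ε * (Δ * ‖Ring.inverse M‖) ^ 2 ≤ 1 →
          IsUnit M' ∧
            ‖R (Ring.inverse M ((adjoint R) b)) - R' (Ring.inverse M' ((adjoint R') b'))‖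
              ≤ c * m * ε * (Δ * ‖Ring.inverse M‖) ^ 2 := by
  refine ⟨50, by norm_num, ?_⟩
  intro H _ _ _ S S' _ _ _ _ hS hS' b b' ε hε hSS' hbb' hb _ m hm R R' hR hR' M M' Mp hM hM' hMp
    Δ hΔ hMu hsmall
  have : Nonempty (Fin m) := ⟨⟨0, hm⟩⟩
  have hm0 : (0 : ℝ) < m := by exact_mod_cast hm
  have hmΔ : 1 ≤ Δ * m := (div_le_iff₀ hm0).1 (hΔ ▸ le_max_right _ _)
  have hΔ0 : 0 ≤ Δ := by nlinarith
  have hRΔ : ‖R‖ ≤ √Δ := by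
    rw [Real.le_sqrt (norm_nonneg R) hΔ0, sq, ← norm_adjoint_comp_self, ← hMp, hΔ]
    exact le_max_left _ _
  have hsqrt_m : √m ≤ m * √Δ :=
    calc √m ≤ √(m ^ 2 * Δ) := Real.sqrt_le_sqrt (by nlinarith)
      _ = m * √Δ := by rw [Real.sqrt_mul (sq_nonneg _), Real.sqrt_sq hm0.le]
  have hRR' : ‖R - R'‖ ≤ 2 * (m * ε) * √Δ :=
    calc ‖R - R'‖ ≤ √m * ‖b - b'‖ + m * ‖S - S'‖ * ‖R‖ := norm_sub_le_of_krylov hS' hR hR'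
      _ ≤ m * √Δ * ε + m * ε * √Δ := by gcongr
      _ = 2 * (m * ε) * √Δ := by ring
  have hεK : ε ≤ m * ε := le_mul_of_one_le_left hε.le (by exact_mod_cast hm)
  have key := galerkin_solution_perturbation hM hM' hS hS' hSS' hb hbb' hεK hRΔ hRR' hMu
    (by rw [Real.sq_sqrt hΔ0]; nlinarith)
  rwa [Real.sq_sqrt hΔ0, ← mul_assoc] at key
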